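/- Let (L,·) be a loop with holomorph H(L). Then H(L) is a cross inverse property loop (CIPL) if and only if AUM(L) is an abelian group and for all x, y ∈ L and all α, β ∈ AUM(L): (xβ · y)·x^ρ = yα. -/

import Mathlib

/-- A loop: a set with a binary operation `*` and identity `1` such that
the equations `a * x = b` and `y * a = b` have unique solutions. -/
class Loop (L : Type*) extends Mul L, One L where
  one_mul : ∀ x : L, 1 * x = x
  mul_one : ∀ x : L, x * 1 = x
  mulLeft_exu : ∀ a b : L, ∃! x : L, a * x = b
  mulRight_exu : ∀ a b : L, ∃! y : L, y * a = b

namespace Loop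

variable {L : Type*} [Loop L]

/-- The right inverse `x^ρ` of `x`, the unique solution of `x * x^ρ = 1`. -/
noncomputable def rinv (x : L) : L := (mulLeft_exu x 1).exists.choose

/-- The left inverse `x^λ` of `x`, the unique solution of `x^λ * x = 1`. -/
noncomputable def linv (x : L) : L := (mulRight_exu x 1).exists.choose

theorem mul_rinv (x : L) : x * rinv x = 1 := (mulLeft_exu x 1).exists.choose_spec

theorem linv_mul (x : L) : linv x * x = 1 := (mulRight_exu x 1).exists.choose_spec

/-- Any automorphism of a loop fixes the identity element. -/
theorem aut_map_one (α : L ≃* L) : α 1 = 1 :=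
  (mulRight_exu (α 1) (α 1)).unique
    (by rw [← map_mul, Loop.one_mul]) (Loop.one_mul _)

end Loop

/-- An automorphic inverse property loop (AIPL): `(x·y)^ρ = x^ρ · y^ρ`. -/
def IsAIPL (L : Type*) [Loop L] : Prop :=
  ∀ x y : L, Loop.rinv (x * y) = Loop.rinv x * Loop.rinv y

/-- A cross inverse property loop (CIPL): `(x·y) · x^ρ = y`. -/
def IsCIPL (L : Type*) [Loop L] : Prop :=
  ∀ x y : L, (x * y) * Loop.rinv x = y

/-- An autotopism of a loop: a triple of bijections `(A, B, C)` with
`xA · yB = (x·y)C` for all `x, y`. -/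
def IsAutotopism {L : Type*} [Loop L] (A B C : L → L) : Prop :=
  Function.Bijective A ∧ Function.Bijective B ∧ Function.Bijective C ∧
    ∀ x y : L, A x * B y = C (x * y)

/-- The holomorph `H(L) = AUM(L) × L` of a loop `L`, with operation
`(α,x)∘(β,y) = (αβ, xβ·y)` (automorphisms act on the right, so
`αβ` is "first `α`, then `β`", i.e. `α.trans β`, and `xβ = β x`). -/
def Holomorph (L : Type*) [Loop L] : Type _ := (L ≃* L) × L

namespace Holomorph

variable {L : Type*} [Loop L]

instance : Mul (Holomorph L) := ⟨fun a b => (a.1.trans b.1, b.1 a.2 * b.2)⟩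

instance : One (Holomorph L) := ⟨(MulEquiv.refl L, 1)⟩

theorem mul_def (a b : Holomorph L) : a * b = (a.1.trans b.1, b.1 a.2 * b.2) := rfl

theorem one_def : (1 : Holomorph L) = (MulEquiv.refl L, (1 : L)) := rfl

noncomputable instance : Loop (Holomorph L) where
  one_mul a := by
    show ((MulEquiv.refl L).trans a.1, a.1 1 * a.2) = a
    have h1 : (MulEquiv.refl L).trans a.1 = a.1 := by ext t; rfl
    have h2 : a.1 (1 : L) * a.2 = a.2 := by rw [Loop.aut_map_one, Loop.one_mul]
    exact Prod.ext h1 h2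
  mul_one a := by
    show (a.1.trans (MulEquiv.refl L), (MulEquiv.refl L) a.2 * 1) = a
    have h1 : a.1.trans (MulEquiv.refl L) = a.1 := by ext t; rfl
    have h2 : (MulEquiv.refl L) a.2 * (1 : L) = a.2 := Loop.mul_one _
    exact Prod.ext h1 h2
  mulLeft_exu a b := by
    obtain ⟨y, hy, hyu⟩ := Loop.mulLeft_exu ((a.1.symm.trans b.1) a.2) b.2
    refine ⟨(a.1.symm.trans b.1, y), ?_, ?_⟩
    · show (a.1.trans (a.1.symm.trans b.1), (a.1.symm.trans b.1) a.2 * y) = b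
      have h1 : a.1.trans (a.1.symm.trans b.1) = b.1 := by
        ext t; simp [MulEquiv.trans_apply]
      exact Prod.ext h1 hy
    · intro c hc
      have h1 : a.1.trans c.1 = b.1 := congrArg Prod.fst hc
      have h2 : c.1 a.2 * c.2 = b.2 := congrArg Prod.snd hc
      have hc1 : c.1 = a.1.symm.trans b.1 := by
        ext t
        have h := congrArg (fun e : L ≃* L => e (a.1.symm t)) h1
        simpa [MulEquiv.trans_apply] using h
      have hc2 : c.2 = y := hyu c.2 (by rw [← hc1]; exact h2)
      exact Prod.ext hc1 hc2
  mulRight_exu a b := by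
    obtain ⟨w, hw, hwu⟩ := Loop.mulRight_exu a.2 b.2
    refine ⟨(b.1.trans a.1.symm, a.1.symm w), ?_, ?_⟩
    · show ((b.1.trans a.1.symm).trans a.1, a.1 (a.1.symm w) * a.2) = b
      have h1 : (b.1.trans a.1.symm).trans a.1 = b.1 := by
        ext t; simp [MulEquiv.trans_apply]
      have h2 : a.1 (a.1.symm w) * a.2 = b.2 := by
        rw [MulEquiv.apply_symm_apply]; exact hw
      exact Prod.ext h1 h2
    · intro c hc
      have h1 : c.1.trans a.1 = b.1 := congrArg Prod.fst hc
      have h2 : a.1 c.2 * a.2 = b.2 := congrArg Prod.snd hc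
      have hc1 : c.1 = b.1.trans a.1.symm := by
        ext t
        have h := congrArg (fun e : L ≃* L => a.1.symm (e t)) h1
        simpa [MulEquiv.trans_apply] using h
      have hc2 : c.2 = a.1.symm w := by
        have h := hwu (a.1 c.2) h2
        have h' := congrArg a.1.symm h
        simpa using h'
      exact Prod.ext hc1 hc2

end Holomorph

theorem Loop.rinv_eq' {L : Type*} [Loop L] {a c : L} (h : a * c = 1) :
    Loop.rinv a = c :=
  (Loop.mulLeft_exu a 1).unique (Loop.mul_rinv a) h

theorem Holomorph.rinv_eq {L : Type*} [Loop L] (a : Holomorph L) :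
    Loop.rinv a = (a.1.symm, Loop.rinv (a.1.symm a.2)) := by
  apply Loop.rinv_eq'
  show ((a.1.trans a.1.symm, a.1.symm a.2 * Loop.rinv (a.1.symm a.2)) : (L ≃* L) × L) = ((MulEquiv.refl L, (1 : L)) : (L ≃* L) × L)
  refine Prod.ext ?_ (Loop.mul_rinv _)
  ext t; simp

/-- `H(L)` is a CIPL iff `AUM(L)` is abelian and
`(xβ · y)·x^ρ = yα` for all `x, y ∈ L`, `α, β ∈ AUM(L)`. -/
theorem statement_8 {L : Type*} [Loop L] :
    IsCIPL (Holomorph L) ↔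
      (∀ α β : L ≃* L, α.trans β = β.trans α) ∧
      ∀ (x y : L) (α β : L ≃* L), (β x * y) * Loop.rinv x = α y := by
  constructor
  · intro h
    have key : ∀ (α β : L ≃* L) (x y : L),
        ((α.trans β).trans α.symm, α.symm (β x * y) * Loop.rinv (α.symm x))
          = ((β, y) : Holomorph L) := by
      intro α β x y
      have := h (show Holomorph L from (α, x)) (show Holomorph L from (β, y))
      rwa [Holomorph.mul_def, Holomorph.rinv_eq, Holomorph.mul_def] at this
    have fst : ∀ α β : L ≃* L, (α.trans β).trans α.symm = β := fun α β =>
      congrArg Prod.fst (key α β 1 1)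
    have snd : ∀ (α β : L ≃* L) (x y : L),
        α.symm (β x * y) * Loop.rinv (α.symm x) = y := fun α β x y =>
      congrArg Prod.snd (key α β x y)
    constructor
    · intro α β
      have := fst α β
      calc α.trans β = ((α.trans β).trans α.symm).trans α := by ext t; simp
        _ = β.trans α := by rw [this]
    · intro x y α β
      have := snd α (α.symm.trans (β.trans α)) (α x) (α y)
      simpa [map_mul, MulEquiv.trans_apply] using this
  · rintro ⟨hcomm, hcond⟩ a b
    obtain ⟨A, x⟩ := a
    obtain ⟨B, y⟩ := b
    have hr := Holomorph.rinv_eq (show Holomorph L from (A, x))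
    show (((A.trans B).trans (Loop.rinv (show Holomorph L from (A, x))).1, (Loop.rinv (show Holomorph L from (A, x))).1 (B x * y) * (Loop.rinv (show Holomorph L from (A, x))).2) : (L ≃* L) × L) = ((B, y) : (L ≃* L) × L)
    rw [hr]
    refine Prod.ext ?_ ?_
    · show (A.trans B).trans A.symm = B
      rw [hcomm A B]; ext t; simp
    · show A.symm (B x * y) * Loop.rinv (A.symm x) = y
      have := hcond (A.symm x) (A.symm y) A (A.trans (B.trans A.symm))
      simpa [map_mul, MulEquiv.trans_apply] using this
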